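/- Let V be a finite-dimensional real inner product space, S ⊆ V a nonempty closed convex set, g : V → ℝ a convex function, and let x ∈ S, x* ∈ S, ε > 0, L > 0, and d ∈ ∂g(x) with d ≠ 0 and ‖d‖ ≤ L. If g(x) > ε and g(x*) ≤ 0, then ‖P_S(x − (g(x)/‖d‖²) d) − x*‖² < ‖x − x*‖² − ε²/L². -/

import Mathlib

/-!
The subgradient step with Polyak's step size `g x / ‖d‖²` moves `x` closer to every point
where `g ≤ 0`: since `⟪d, x - x*⟫ ≥ g x - g x* ≥ g x`, expanding the square gives a decrease of
at least `(g x)² / ‖d‖² > ε² / L²`. Projecting back onto `S` cannot undo this, because a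
nearest-point map onto a convex set makes an obtuse angle with every point of the set.
-/

/-- The subdifferential of `g : V → ℝ` at `x`. -/
def subdiff {V : Type*} [NormedAddCommGroup V] [InnerProductSpace ℝ V]
    (g : V → ℝ) (x : V) : Set V :=
  {d | ∀ y, g x + (inner ℝ d (y - x) : ℝ) ≤ g y}

open RealInnerProductSpace

section

variable {V : Type*} [NormedAddCommGroup V] [InnerProductSpace ℝ V]

theorem real_inner_sub_nearest_nonpos {K : Set V} (hK : Convex ℝ K) {y p z : V}
    (hp : p ∈ K) (hmin : ∀ w ∈ K, ‖y - p‖ ≤ ‖y - w‖) (hz : z ∈ K) :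
    ⟪y - p, z - p⟫ ≤ 0 := by
  have : Nonempty K := ⟨⟨p, hp⟩⟩
  have hinf : ‖y - p‖ = ⨅ w : K, ‖y - w‖ :=
    le_antisymm (le_ciInf fun w => hmin w w.2)
      (ciInf_le (f := fun w : K => ‖y - w‖) ⟨0, by rintro r ⟨w, rfl⟩; positivity⟩ ⟨p, hp⟩)
  exact (norm_eq_iInf_iff_real_inner_le_zero hK hp).mp hinf z hz

theorem norm_nearest_sub_sq_le {K : Set V} (hK : Convex ℝ K) {y p z : V}
    (hp : p ∈ K) (hmin : ∀ w ∈ K, ‖y - p‖ ≤ ‖y - w‖) (hz : z ∈ K) :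
    ‖p - z‖ ^ 2 ≤ ‖y - z‖ ^ 2 := by
  have hobtuse := real_inner_sub_nearest_nonpos hK hp hmin hz
  have hexpand : ‖y - z‖ ^ 2 = ‖y - p‖ ^ 2 - 2 * ⟪y - p, z - p⟫ + ‖p - z‖ ^ 2 := by
    rw [show y - z = (y - p) - (z - p) by abel, norm_sub_sq_real, ← norm_neg (z - p),
      neg_sub]
  nlinarith [sq_nonneg ‖y - p‖]

theorem real_inner_sub_ge_of_mem_subdiff {g : V → ℝ} {x d : V} (hd : d ∈ subdiff g x)
    (z : V) : g x - g z ≤ ⟪d, x - z⟫ := by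
  have h := hd z
  rw [show z - x = -(x - z) by abel, inner_neg_right] at h
  linarith

theorem norm_polyak_step_sub_sq_le {g : V → ℝ} {x d z : V} (hd : d ∈ subdiff g x)
    (hd0 : d ≠ 0) (hgx : 0 ≤ g x) (hgz : g z ≤ 0) :
    ‖x - (g x / ‖d‖ ^ 2) • d - z‖ ^ 2 ≤ ‖x - z‖ ^ 2 - g x ^ 2 / ‖d‖ ^ 2 := by
  set t := g x / ‖d‖ ^ 2
  have hdsq : 0 < ‖d‖ ^ 2 := by positivity
  have ht : 0 ≤ t := by positivity
  have hexpand : ‖x - t • d - z‖ ^ 2 = ‖x - z‖ ^ 2 - 2 * t * ⟪d, x - z⟫ + t * (t * ‖d‖ ^ 2) := by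
    rw [show x - t • d - z = (x - z) - t • d by abel, norm_sub_sq_real, real_inner_smul_right,
      norm_smul, Real.norm_eq_abs, abs_of_nonneg ht, real_inner_comm]
    ring
  have hstep : t * ‖d‖ ^ 2 = g x := div_mul_cancel₀ _ hdsq.ne'
  have hsq : t * g x = g x ^ 2 / ‖d‖ ^ 2 := by rw [← hstep]; field_simp
  have hinner : g x ≤ ⟪d, x - z⟫ := by linarith [real_inner_sub_ge_of_mem_subdiff hd z]
  rw [hexpand, hstep]
  nlinarith [mul_le_mul_of_nonneg_left hinner ht]

end

theorem stmt3_general {V : Type*} [NormedAddCommGroup V] [InnerProductSpace ℝ V]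
    (S : Set V) (hScv : Convex ℝ S)
    (g : V → ℝ)
    (x xstar : V) (hxstar : xstar ∈ S)
    (ε L : ℝ) (hε : 0 < ε)
    (d : V) (hd : d ∈ subdiff g x) (hd0 : d ≠ 0) (hdL : ‖d‖ ≤ L)
    (proj : V → V)
    (hproj : ∀ y, proj y ∈ S ∧ ∀ z ∈ S, ‖y - proj y‖ ≤ ‖y - z‖)
    (hgx : g x > ε) (hgxstar : g xstar ≤ 0) :
    ‖proj (x - (g x / ‖d‖ ^ 2) • d) - xstar‖ ^ 2 < ‖x - xstar‖ ^ 2 - ε ^ 2 / L ^ 2 := by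
  obtain ⟨hpS, hpmin⟩ := hproj (x - (g x / ‖d‖ ^ 2) • d)
  have hdn : 0 < ‖d‖ := norm_pos_iff.mpr hd0
  have hgap : ε ^ 2 / L ^ 2 < g x ^ 2 / ‖d‖ ^ 2 :=
    calc ε ^ 2 / L ^ 2 ≤ ε ^ 2 / ‖d‖ ^ 2 := by gcongr
      _ < g x ^ 2 / ‖d‖ ^ 2 := by gcongr
  calc ‖proj (x - (g x / ‖d‖ ^ 2) • d) - xstar‖ ^ 2
      ≤ ‖x - (g x / ‖d‖ ^ 2) • d - xstar‖ ^ 2 := norm_nearest_sub_sq_le hScv hpS hpmin hxstar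
    _ ≤ ‖x - xstar‖ ^ 2 - g x ^ 2 / ‖d‖ ^ 2 :=
      norm_polyak_step_sub_sq_le hd hd0 (by linarith) hgxstar
    _ < ‖x - xstar‖ ^ 2 - ε ^ 2 / L ^ 2 := by linarith

theorem stmt3 {V : Type*} [NormedAddCommGroup V] [InnerProductSpace ℝ V]
    [FiniteDimensional ℝ V]
    (S : Set V) (hSne : S.Nonempty) (hScl : IsClosed S) (hScv : Convex ℝ S)
    (g : V → ℝ) (hg : ConvexOn ℝ Set.univ g)
    (x xstar : V) (hx : x ∈ S) (hxstar : xstar ∈ S)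
    (ε L : ℝ) (hε : 0 < ε) (hL : 0 < L)
    (d : V) (hd : d ∈ subdiff g x) (hd0 : d ≠ 0) (hdL : ‖d‖ ≤ L)
    (proj : V → V)
    (hproj : ∀ y, proj y ∈ S ∧ ∀ z ∈ S, ‖y - proj y‖ ≤ ‖y - z‖)
    (hgx : g x > ε) (hgxstar : g xstar ≤ 0) :
    ‖proj (x - (g x / ‖d‖ ^ 2) • d) - xstar‖ ^ 2 < ‖x - xstar‖ ^ 2 - ε ^ 2 / L ^ 2 :=
  stmt3_general S hScv g x xstar hxstar ε L hε d hd hd0 hdL proj hproj hgx hgxstar
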